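/- Let F : C ⥤ D be a fully faithful functor such that every object of D is a retract of an object in the image of F (i.e. for every d in D there exist c in C and morphisms i : d → F(c), r : F(c) → d with r ∘ i = id). Then the induced functor Karoubi(C) ⥤ Karoubi(D) on idempotent completions is an equivalence of categories. -/

import Mathlib

open CategoryTheory CategoryTheory.Idempotents

/-- If `F : C ⥤ D` is fully faithful and every object of `D` is a retract of an object
in the image of `F`, then the induced functor on Karoubi envelopes (idempotent
completions) is an equivalence of categories. -/
theorem karoubi_map_isEquivalence {C D : Type*} [Category C] [Category D]
    (F : C ⥤ D) [F.Full] [F.Faithful]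
    (hdom : ∀ d : D, ∃ (c : C) (i : d ⟶ F.obj c) (r : F.obj c ⟶ d), i ≫ r = 𝟙 d) :
    ((functorExtension₂ C D).obj F).IsEquivalence := by
  set G := (functorExtension₂ C D).obj F with hG
  have hobjX : ∀ P : Karoubi C, (G.obj P).X = F.obj P.X := fun P => rfl
  have hobjp : ∀ P : Karoubi C, (G.obj P).p = F.map P.p := fun P => rfl
  have hmap : ∀ {P Q : Karoubi C} (f : P ⟶ Q), (G.map f).f = F.map f.f := fun f => rfl
  have faithful : G.Faithful := by
    constructor
    intro P Q f g h
    ext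
    apply F.map_injective
    rw [← hmap f, ← hmap g, h]
  have full : G.Full := by
    constructor
    intro P Q g
    refine ⟨⟨F.preimage g.f, ?_⟩, ?_⟩
    · apply F.map_injective
      rw [Functor.map_comp, Functor.map_comp, F.map_preimage g.f]
      exact g.comm
    · ext
      exact F.map_preimage g.f
  have essSurj : G.EssSurj := by
    constructor
    intro Q
    obtain ⟨c, i, r, hir⟩ := hdom Q.X
    set e : F.obj c ⟶ F.obj c := r ≫ Q.p ≫ i with he
    have hee : e ≫ e = e := by
      simp only [he, Category.assoc]
      rw [← Category.assoc i r, hir, Category.id_comp, Q.idem_assoc]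
    set e' : c ⟶ c := F.preimage e with he'
    have hFe' : F.map e' = e := F.map_preimage e
    have he'e' : e' ≫ e' = e' := by
      apply F.map_injective
      rw [Functor.map_comp, hFe', hee]
    refine ⟨⟨c, e', he'e'⟩, ⟨?_⟩⟩
    refine ⟨⟨r ≫ Q.p, ?_⟩, ⟨Q.p ≫ i, ?_⟩, ?_, ?_⟩
    · show F.map e' ≫ (r ≫ Q.p) ≫ Q.p = r ≫ Q.p
      rw [hFe', he]
      simp only [Category.assoc, Q.idem]
      rw [← Category.assoc i r, hir, Category.id_comp, Q.idem]
    · show Q.p ≫ (Q.p ≫ i) ≫ F.map e' = Q.p ≫ i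
      rw [hFe', he]
      simp only [Category.assoc]
      rw [← Category.assoc i r, hir, Category.id_comp, Q.idem_assoc, Q.idem_assoc]
    · ext
      show (r ≫ Q.p) ≫ Q.p ≫ i = F.map e'
      rw [hFe', he]
      simp only [Category.assoc, Q.idem_assoc]
    · ext
      show (Q.p ≫ i) ≫ r ≫ Q.p = Q.p
      simp only [Category.assoc]
      rw [← Category.assoc i r, hir, Category.id_comp, Q.idem]
  exact { }
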